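/- Let x ≥ 16, suppose log g ~ y where y = 3(1+3λ) log x · log₄x/log₃x, and suppose a set S of positive integers N ≤ X = 4gx satisfies #S ≫ x/(e^C log x)^k for fixed constants C, k. Then for x sufficiently large, #S ≥ X^{1 − ε(X)} where ε(X) = (log₄X)²/log₃X. -/

import Mathlib

open Filter Real

lemma log_le_two_sqrt' {u : ℝ} (hu : 0 < u) : Real.log u ≤ 2 * Real.sqrt u := by
  have h1 : Real.log (Real.sqrt u) ≤ Real.sqrt u - 1 :=
    Real.log_le_sub_one_of_pos (Real.sqrt_pos.mpr hu)
  have h2 : Real.log u = 2 * Real.log (Real.sqrt u) := by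
    rw [Real.log_sqrt hu.le]; ring
  nlinarith [Real.sqrt_nonneg u]

lemma aux_qsmall {A p : ℝ} (hA : 0 < A) (hp : 36 * A ^ 2 + 3 ≤ p) :
    3 * A * Real.log p ≤ p := by
  have hpp : 0 < p := by nlinarith [sq_nonneg A]
  have hs : Real.log p ≤ 2 * Real.sqrt p := log_le_two_sqrt' hpp
  have h6A : 6 * A ≤ Real.sqrt p := by
    rw [Real.le_sqrt (by positivity) hpp.le]; nlinarith
  have h1 : 3 * A * Real.log p ≤ 3 * A * (2 * Real.sqrt p) :=
    mul_le_mul_of_nonneg_left hs (by positivity)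
  have h2 : 6 * A * Real.sqrt p ≤ Real.sqrt p * Real.sqrt p :=
    mul_le_mul_of_nonneg_right h6A (Real.sqrt_nonneg p)
  have h3 : Real.sqrt p * Real.sqrt p = p := Real.mul_self_sqrt hpp.le
  nlinarith

lemma aux_logsq {a : ℝ} (ha : 1 ≤ a) : (Real.log a) ^ 2 ≤ 4 * a := by
  have ha0 : (0:ℝ) < a := by linarith
  have hs : Real.log a ≤ 2 * Real.sqrt a := log_le_two_sqrt' ha0
  have hnn : 0 ≤ Real.log a := Real.log_nonneg ha
  nlinarith [Real.sq_sqrt ha0.le, Real.sqrt_nonneg a]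

lemma aux_piece2h1 {a b p q : ℝ} (hp : 0 < p) (hbp : b * p ≤ 4 * a) :
    q ^ 2 * b / 16 ≤ q ^ 2 * a / (4 * p) := by
  rw [div_le_div_iff₀ (by norm_num) (by positivity)]
  nlinarith [mul_le_mul_of_nonneg_left hbp (sq_nonneg q)]

lemma aux_piece1 {A a p q : ℝ} (hA : 0 < A) (ha : 0 < a) (hp : 0 < p) (hq : 0 < q)
    (h6 : 6 * A ≤ q) : 3 * (A * a * (q / p)) / 2 ≤ q ^ 2 * a / (4 * p) := by
  rw [div_le_div_iff₀ (by norm_num) (by positivity)]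
  have e : A * a * (q / p) * p = A * a * q := by field_simp
  have h1 : 6 * A * (q * a) ≤ q * (q * a) :=
    mul_le_mul_of_nonneg_right h6 (by positivity)
  nlinarith

lemma aux_Kb {b q K : ℝ} (hb : 1 ≤ b) (hq1 : 1 ≤ q) (hqK : 16 * K ≤ q) :
    K * b ≤ q ^ 2 * b / 16 := by
  have h0 : (0:ℝ) ≤ b := by linarith
  have h1 : 16 * K * b ≤ q * b := mul_le_mul_of_nonneg_right hqK h0
  have h2 : q * b ≤ q * (q * b) :=
    le_mul_of_one_le_left (by positivity) hq1
  nlinarith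

set_option maxHeartbeats 2000000 in
/-- If `log g ~ y` with `y = 3(1+3λ) log x · log₄x / log₃x`, and a set `S` of positive
integers `N ≤ X := 4 g x` has `#S ≫ x/(e^C log x)^k`, then for large `x`,
`#S ≥ X^(1 - ε(X))` with `ε(X) = (log₄X)^2 / log₃X`. -/
theorem stmt_18 (lam C c : ℝ) (k : ℕ) (hlam : 0 < lam) (hC : 0 < C) (hc : 0 < c)
    (hk : 1 ≤ k) :
    ∃ δ : ℝ, 0 < δ ∧ ∃ x₀ : ℝ, ∀ x : ℝ, x₀ ≤ x → ∀ g : ℝ, 0 < g →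
      |Real.log g -
          3 * (1 + 3 * lam) * Real.log x *
            (Real.log (Real.log (Real.log (Real.log x))) / Real.log (Real.log (Real.log x)))|
        ≤ δ * (3 * (1 + 3 * lam) * Real.log x *
            (Real.log (Real.log (Real.log (Real.log x))) / Real.log (Real.log (Real.log x)))) →
      ∀ S : Finset ℕ, (∀ N ∈ S, 0 < N ∧ (N : ℝ) ≤ 4 * g * x) →
        c * x / (Real.exp C * Real.log x) ^ k ≤ (S.card : ℝ) →
        (4 * g * x) ^ (1 -
            (Real.log (Real.log (Real.log (Real.log (4 * g * x))))) ^ 2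
              / Real.log (Real.log (Real.log (4 * g * x))))
          ≤ (S.card : ℝ) := by
  set A : ℝ := 3 * (1 + 3 * lam) with hA_def
  have hA3 : (3:ℝ) ≤ A := by simp only [hA_def]; linarith
  have hApos : (0:ℝ) < A := by linarith
  have hk1 : (1:ℝ) ≤ (k:ℝ) := by exact_mod_cast hk
  have hkC : (0:ℝ) ≤ (k:ℝ) * C := by positivity
  have habsc : (0:ℝ) ≤ |Real.log c| := abs_nonneg _
  set K : ℝ := 3 + (k:ℝ) * C + (k:ℝ) + |Real.log c| with hK_def
  have hK3 : (3:ℝ) ≤ K := by simp only [hK_def]; linarith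
  set M : ℝ := 6 * A + 16 * K + 1 with hM_def
  have hM1 : (1:ℝ) ≤ M := by simp only [hM_def]; linarith
  refine ⟨1/2, by norm_num, ?_⟩
  have t1 : Tendsto Real.log atTop atTop := Real.tendsto_log_atTop
  have t2 : Tendsto (fun x : ℝ => Real.log (Real.log x)) atTop atTop := t1.comp t1
  have t3 : Tendsto (fun x : ℝ => Real.log (Real.log (Real.log x))) atTop atTop := t1.comp t2
  have t4 : Tendsto (fun x : ℝ => Real.log (Real.log (Real.log (Real.log x)))) atTop atTop :=
    t1.comp t3
  have E : ∀ᶠ x : ℝ in atTop, 1 ≤ x ∧ 6 ≤ Real.log x ∧ 1 ≤ Real.log (Real.log x) ∧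
      36 * A ^ 2 + 3 ≤ Real.log (Real.log (Real.log x)) ∧
      M ≤ Real.log (Real.log (Real.log (Real.log x))) := by
    filter_upwards [eventually_ge_atTop (1:ℝ), t1.eventually_ge_atTop 6,
      t2.eventually_ge_atTop 1, t3.eventually_ge_atTop (36 * A ^ 2 + 3),
      t4.eventually_ge_atTop M] with x h1 h2 h3 h4 h5
    exact ⟨h1, h2, h3, h4, h5⟩
  obtain ⟨x₀, hx₀⟩ := Filter.eventually_atTop.mp E
  refine ⟨x₀, ?_⟩
  intro x hx g hg habs S _hS hcard
  obtain ⟨hx1, ha6, hb1, hp36, hqM⟩ := hx₀ x hx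
  set a : ℝ := Real.log x with ha_def
  set b : ℝ := Real.log a with hb_def
  set p : ℝ := Real.log b with hp_def
  set q : ℝ := Real.log p with hq_def
  have hxpos : (0:ℝ) < x := by linarith
  have hapos : (0:ℝ) < a := by linarith
  have hbpos : (0:ℝ) < b := by linarith
  have hp3 : (3:ℝ) ≤ p := by have := sq_nonneg A; linarith
  have hppos : (0:ℝ) < p := by linarith
  have hqpos : (0:ℝ) < q := by linarith
  set y : ℝ := A * a * (q / p) with hy_def
  have hypos : 0 < y := by positivity
  -- bounds on log g
  have habs' := abs_le.mp habs
  have hlg_lb : y / 2 ≤ Real.log g := by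
    have h := habs'.1; linarith
  have hlg_ub : Real.log g ≤ 3 * y / 2 := by
    have h := habs'.2; linarith
  -- q/p is small : 3*A*q ≤ p
  have hq_small : 3 * A * q ≤ p := by
    have h := aux_qsmall hApos hp36
    rwa [← hq_def] at h
  have hy_le : y ≤ a / 3 := by
    have hqp_small : q / p ≤ 1 / (3 * A) := by
      rw [div_le_div_iff₀ hppos (by positivity)]
      linarith
    have h1 : A * a * (q / p) ≤ A * a * (1 / (3 * A)) :=
      mul_le_mul_of_nonneg_left hqp_small (by positivity)
    have h2 : A * a * (1 / (3 * A)) = a / 3 := by field_simp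
    rw [hy_def]; linarith [h1.trans_eq h2]
  set X : ℝ := 4 * g * x with hX_def
  have hXpos : 0 < X := by positivity
  have hlog4 : Real.log 4 ≤ 3 := by
    have := Real.log_le_sub_one_of_pos (by norm_num : (0:ℝ) < 4); linarith
  have hlog4nn : 0 ≤ Real.log 4 := Real.log_nonneg (by norm_num)
  have hLX_eq : Real.log X = Real.log 4 + Real.log g + a := by
    rw [hX_def, Real.log_mul (by positivity) (ne_of_gt hxpos),
      Real.log_mul (by norm_num) (ne_of_gt hg)]
  have hLX_lb : a ≤ Real.log X := by rw [hLX_eq]; linarith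
  have hLX_ub : Real.log X ≤ 2 * a := by rw [hLX_eq]; linarith
  have hLXpos : 0 < Real.log X := lt_of_lt_of_le hapos hLX_lb
  have hlog2 : Real.log 2 ≤ 1 := by
    have := Real.log_le_sub_one_of_pos (by norm_num : (0:ℝ) < 2); linarith
  -- second log
  have hL2_lb : b ≤ Real.log (Real.log X) := Real.log_le_log hapos hLX_lb
  have hL2_ub : Real.log (Real.log X) ≤ b + 1 := by
    have h1 : Real.log (Real.log X) ≤ Real.log (2 * a) := Real.log_le_log hLXpos hLX_ub
    have h2 : Real.log (2 * a) = Real.log 2 + b := Real.log_mul (by norm_num) (ne_of_gt hapos)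
    linarith
  have hL2pos : 0 < Real.log (Real.log X) := lt_of_lt_of_le hbpos hL2_lb
  -- third log
  have hL3_lb : p ≤ Real.log (Real.log (Real.log X)) := Real.log_le_log hbpos hL2_lb
  have hL3_ub : Real.log (Real.log (Real.log X)) ≤ p + 1 := by
    have h1 : Real.log (Real.log (Real.log X)) ≤ Real.log (2 * b) :=
      Real.log_le_log hL2pos (by linarith)
    have h2 : Real.log (2 * b) = Real.log 2 + p := Real.log_mul (by norm_num) (ne_of_gt hbpos)
    linarith
  have hL3pos : 0 < Real.log (Real.log (Real.log X)) := lt_of_lt_of_le hppos hL3_lb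
  -- fourth log
  have hL4_lb : q ≤ Real.log (Real.log (Real.log (Real.log X))) := Real.log_le_log hppos hL3_lb
  set e4 : ℝ := Real.log (Real.log (Real.log (Real.log X))) with he4
  set e3 : ℝ := Real.log (Real.log (Real.log X)) with he3
  set ε : ℝ := e4 ^ 2 / e3 with hε
  have hεnn : 0 ≤ ε := div_nonneg (sq_nonneg _) hL3pos.le
  have hε_lb : q ^ 2 / (p + 1) ≤ ε := by
    refine div_le_div₀ (sq_nonneg _) ?_ hL3pos hL3_ub
    exact pow_le_pow_left₀ hqpos.le hL4_lb 2
  have hεLX : q ^ 2 * a / (2 * p) ≤ ε * Real.log X := by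
    have h1 : q ^ 2 / (2 * p) ≤ q ^ 2 / (p + 1) :=
      div_le_div₀ (sq_nonneg _) le_rfl (by linarith) (by linarith [hp3])
    have h2 : q ^ 2 / (2 * p) * a ≤ ε * Real.log X :=
      mul_le_mul (h1.trans hε_lb) hLX_lb hapos.le hεnn
    calc q ^ 2 * a / (2 * p) = q ^ 2 / (2 * p) * a := by ring
      _ ≤ ε * Real.log X := h2
  -- b^2 ≤ 4a and b*p ≤ 4a
  have hba : b ^ 2 ≤ 4 * a := by
    have h := aux_logsq (by linarith : (1:ℝ) ≤ a)
    rwa [← hb_def] at h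
  have hpb : p ≤ b := by
    have h := Real.log_le_self hbpos.le
    rwa [← hp_def] at h
  have hbp4a : b * p ≤ 4 * a := by
    have h := mul_le_mul_of_nonneg_left hpb hbpos.le
    have hbb : b * b = b ^ 2 := by ring
    linarith
  -- key pieces
  have hMe : M = 6 * A + 16 * K + 1 := hM_def
  have hq6A : 6 * A ≤ q := by linarith
  have hq16K : 16 * K ≤ q := by linarith
  have piece1 : 3 * y / 2 ≤ q ^ 2 * a / (4 * p) := by
    have h := aux_piece1 hApos hapos hppos hqpos hq6A
    rw [hy_def]; linarith
  have piece2 : 3 + (k:ℝ) * C + (k:ℝ) * b + |Real.log c| ≤ q ^ 2 * a / (4 * p) := by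
    have h1 : q ^ 2 * b / 16 ≤ q ^ 2 * a / (4 * p) := aux_piece2h1 hppos hbp4a
    have h2 : K * b ≤ q ^ 2 * b / 16 := aux_Kb hb1 (by linarith) hq16K
    have h3 : 3 + (k:ℝ) * C + (k:ℝ) * b + |Real.log c| ≤ K * b := by
      have e1 : K * b = 3 * b + ((k:ℝ) * C) * b + (k:ℝ) * b + |Real.log c| * b := by
        rw [hK_def]; ring
      have i1 : (k:ℝ) * C ≤ ((k:ℝ) * C) * b := le_mul_of_one_le_right hkC hb1
      have i2 : |Real.log c| ≤ |Real.log c| * b := le_mul_of_one_le_right habsc hb1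
      linarith
    exact le_trans h3 (le_trans h2 h1)
  have hmain : (1 - ε) * Real.log X ≤ Real.log c + a - (k:ℝ) * (C + b) := by
    have hlgub : Real.log X ≤ 3 + 3 * y / 2 + a := by rw [hLX_eq]; linarith
    have hsum : 3 * y / 2 + (3 + (k:ℝ) * C + (k:ℝ) * b + |Real.log c|)
        ≤ ε * Real.log X := by
      have e0 : q ^ 2 * a / (4 * p) + q ^ 2 * a / (4 * p) = q ^ 2 * a / (2 * p) := by ring
      linarith
    have hclog : -|Real.log c| ≤ Real.log c := neg_abs_le _
    linarith [hlgub, hsum, hclog]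
  have hRHS_pos : 0 < c * x / (Real.exp C * a) ^ k := by positivity
  have hRHS_log : Real.log (c * x / (Real.exp C * a) ^ k)
      = Real.log c + a - (k:ℝ) * (C + b) := by
    rw [Real.log_div (by positivity) (by positivity),
      Real.log_mul (ne_of_gt hc) (ne_of_gt hxpos), Real.log_pow,
      Real.log_mul (Real.exp_ne_zero C) (ne_of_gt hapos), Real.log_exp]
  calc X ^ (1 - e4 ^ 2 / e3) = Real.exp ((1 - ε) * Real.log X) := by
        rw [Real.rpow_def_of_pos hXpos, ← hε, mul_comm]
      _ ≤ Real.exp (Real.log (c * x / (Real.exp C * a) ^ k)) := by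
        rw [Real.exp_le_exp, hRHS_log]; exact hmain
      _ = c * x / (Real.exp C * a) ^ k := Real.exp_log hRHS_pos
      _ ≤ (S.card : ℝ) := hcard
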